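/- arXiv:2201.01236 — 6 statements merged into one kernel-verified Lean document; each statement's English description precedes it below -/
import Mathlib

section
/- Any acyclic class of maps in a topos is right cancellable: if a composite v ∘ u belongs to the acyclic class and u belongs to it, then v belongs to it. -/
/-!
In the arrow category, `v` is the pushout of the span `𝟙 Y ← u → u ≫ v`: componentwise the
square consists of a pushout of `u` along identities and a pushout of `v` along identities.
The three corners of the span lie in the acyclic class, hence so does `v`.
-/

open CategoryTheory CategoryTheory.Limits

universe v u

namespace Paper

/-- A class of maps is closed under colimits in the arrow category. -/
def ClosedUnderColimits {C : Type u} [Category.{v} C] (P : MorphismProperty C) : Prop :=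
  ∀ (J : Type v) [SmallCategory J] (D : J ⥤ Arrow C)
    (c : Cocone D), IsColimit c → (∀ j, P (D.obj j).hom) → P c.pt.hom

/-- A class of maps is closed under finite limits in the arrow category. -/
def ClosedUnderFiniteLimits {C : Type u} [Category.{v} C] (P : MorphismProperty C) : Prop :=
  ∀ (J : Type v) [SmallCategory J] [FinCategory J] (D : J ⥤ Arrow C)
    (c : Cone D), IsLimit c → (∀ j, P (D.obj j).hom) → P c.pt.hom

/-- An acyclic class of maps: contains isomorphisms, closed under composition,
colimits in the arrow category, and base change. -/
structure AcyclicClass (C : Type u) [Category.{v} C] where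
  P : MorphismProperty C
  iso : ∀ ⦃X Y : C⦄ (f : X ⟶ Y), IsIso f → P f
  comp : ∀ ⦃X Y Z : C⦄ (f : X ⟶ Y) (g : Y ⟶ Z), P f → P g → P (f ≫ g)
  colim : ClosedUnderColimits P
  base_change : ∀ ⦃X Y X' Y' : C⦄ (f : X ⟶ Y) (f' : X' ⟶ Y') (g : Y' ⟶ Y) (g' : X' ⟶ X),
    IsPullback g' f' f g → P f → P f'

/-- The smallest acyclic class containing `S` (the acyclic class generated by `S`). -/
def acClosure {C : Type u} [Category.{v} C] (S : MorphismProperty C) : MorphismProperty C :=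
  fun _ _ f => ∀ A : AcyclicClass C, (∀ ⦃X Y : C⦄ (g : X ⟶ Y), S g → A.P g) → A.P f

/-- The smallest congruence (acyclic class closed under finite limits) containing `S`. -/
def congClosure {C : Type u} [Category.{v} C] (S : MorphismProperty C) : MorphismProperty C :=
  fun _ _ f => ∀ A : AcyclicClass C, ClosedUnderFiniteLimits A.P →
    (∀ ⦃X Y : C⦄ (g : X ⟶ Y), S g → A.P g) → A.P f

/-- A (surjection, monomorphism) image factorization for every map:
`f = e f ≫ m f` with `e f` an effective epi and `m f` a mono. -/
structure ImageFactorisation (C : Type u) [Category.{v} C] where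
  mid : ∀ {X Y : C}, (X ⟶ Y) → C
  e : ∀ {X Y : C} (f : X ⟶ Y), X ⟶ mid f
  m : ∀ {X Y : C} (f : X ⟶ Y), mid f ⟶ Y
  fac : ∀ {X Y : C} (f : X ⟶ Y), e f ≫ m f = f
  epi : ∀ {X Y : C} (f : X ⟶ Y), EffectiveEpi (e f)
  mono : ∀ {X Y : C} (f : X ⟶ Y), Mono (m f)

/-- Iterated diagonal of an arrow: `iterDiag 0 f = f`, `iterDiag (n+1) f = iterDiag n (Δ f)`. -/
noncomputable def iterDiag {C : Type u} [Category.{v} C] [HasPullbacks C] :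
    ℕ → Arrow C → Arrow C
  | 0, f => f
  | n+1, f => iterDiag n (Arrow.mk (pullback.diagonal f.hom))

/-- The class of maps all of whose iterated diagonals lie in `P`. -/
def suspInfty {C : Type u} [Category.{v} C] [HasPullbacks C] (P : MorphismProperty C) :
    MorphismProperty C :=
  fun _ _ f => ∀ n : ℕ, P (iterDiag n (Arrow.mk f)).hom

/-- The class of `P`-hypercoverings: maps whose iterated diagonals all have image in `P`. -/
def hcover {C : Type u} [Category.{v} C] [HasPullbacks C] (F : ImageFactorisation C)
    (P : MorphismProperty C) : MorphismProperty C :=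
  fun _ _ f => ∀ n : ℕ, P (F.m (iterDiag n (Arrow.mk f)).hom)

/-- `connMaps n` : maps whose first `n` iterated diagonals (starting with the map itself)
are effective epimorphisms.  `connMaps 1` is the class of surjections. -/
def connMaps {C : Type u} [Category.{v} C] [HasPullbacks C] (n : ℕ) : MorphismProperty C :=
  fun _ _ f => ∀ k < n, EffectiveEpi (iterDiag k (Arrow.mk f)).hom

/-- ∞-connected maps: all iterated diagonals are effective epimorphisms. -/
def infConn {C : Type u} [Category.{v} C] [HasPullbacks C] : MorphismProperty C :=
  fun _ _ f => ∀ k : ℕ, EffectiveEpi (iterDiag k (Arrow.mk f)).hom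

/-- `u` is (uniquely) left orthogonal to `f`: every commutative square has a unique diagonal
filler. -/
def UniqueLift {C : Type u} [Category.{v} C] {A B X Y : C} (u : A ⟶ B) (f : X ⟶ Y) : Prop :=
  ∀ (a : A ⟶ X) (b : B ⟶ Y), u ≫ b = a ≫ f → ∃! d : B ⟶ X, u ≫ d = a ∧ d ≫ f = b

/-- A class of maps is local: membership can be checked after base change along
an effective epimorphic family. -/
def IsLocalClass {C : Type u} [Category.{v} C] [HasPullbacks C] (M : MorphismProperty C) : Prop :=
  ∀ ⦃X Y : C⦄ (f : X ⟶ Y) (I : Type v) (B : I → C) (g : ∀ i, B i ⟶ Y),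
    EffectiveEpiFamily B g → (∀ i, M (pullback.snd f (g i))) → M f

/-- A Grothendieck topology on a topos: a class of monomorphisms containing isomorphisms,
closed under composition and base change, local, and right cancellable among monos. -/
structure IsGTopology {C : Type u} [Category.{v} C] [HasPullbacks C]
    (G : MorphismProperty C) : Prop where
  mono : ∀ ⦃X Y : C⦄ (f : X ⟶ Y), G f → Mono f
  iso : ∀ ⦃X Y : C⦄ (f : X ⟶ Y), IsIso f → G f
  comp : ∀ ⦃X Y Z : C⦄ (f : X ⟶ Y) (g : Y ⟶ Z), G f → G g → G (f ≫ g)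
  base_change : ∀ ⦃X Y X' Y' : C⦄ (f : X ⟶ Y) (f' : X' ⟶ Y') (g : Y' ⟶ Y) (g' : X' ⟶ X),
    IsPullback g' f' f g → G f → G f'
  localClass : IsLocalClass G
  right_cancel : ∀ ⦃X Y Z : C⦄ (u : X ⟶ Y) (v : Y ⟶ Z), Mono u → Mono v → G (u ≫ v) → G v

/-- A Lawvere–Tierney topology, presented as a closure operator on subobject lattices
which is monotone, inflating, idempotent, and natural (compatible with pullback). -/
structure LTTopology (C : Type u) [Category.{v} C] [HasPullbacks C] where
  j : ∀ (A : C), Subobject A → Subobject A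
  monotone : ∀ (A : C) (S T : Subobject A), S ≤ T → j A S ≤ j A T
  inflating : ∀ (A : C) (S : Subobject A), S ≤ j A S
  idem : ∀ (A : C) (S : Subobject A), j A (j A S) = j A S
  natural : ∀ ⦃A B : C⦄ (f : A ⟶ B) (S : Subobject B),
    (Subobject.pullback f).obj (j B S) = j A ((Subobject.pullback f).obj S)

/-- The class of `j`-dense monomorphisms. -/
def DenseClass {C : Type u} [Category.{v} C] [HasPullbacks C] (jt : LTTopology C) :
    MorphismProperty C :=
  fun _ A m => ∃ h : Mono m, jt.j A (@Subobject.mk _ _ _ _ m h) = ⊤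

/-- The class of `j`-closed monomorphisms. -/
def ClosedClass {C : Type u} [Category.{v} C] [HasPullbacks C] (jt : LTTopology C) :
    MorphismProperty C :=
  fun _ A m => ∃ h : Mono m, jt.j A (@Subobject.mk _ _ _ _ m h) = @Subobject.mk _ _ _ _ m h

/-- The smallest Grothendieck topology containing `S`. -/
def gtopClosure {C : Type u} [Category.{v} C] [HasPullbacks C] (S : MorphismProperty C) :
    MorphismProperty C :=
  fun _ _ f => ∀ G : MorphismProperty C, IsGTopology G →
    (∀ ⦃X Y : C⦄ (g : X ⟶ Y), S g → G g) → G f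

/-- The class of `G`-coverings: maps whose image lies in `G`. -/
def coverOf {C : Type u} [Category.{v} C] (F : ImageFactorisation C) (G : MorphismProperty C) :
    MorphismProperty C :=
  fun _ _ f => G (F.m f)

/-- The class of `G`-closed monomorphisms: monomorphisms uniquely right orthogonal to `G`. -/
def closeOf {C : Type u} [Category.{v} C] (G : MorphismProperty C) : MorphismProperty C :=
  fun _ _ f => Mono f ∧ ∀ ⦃S A : C⦄ (u : S ⟶ A), G u → UniqueLift u f

end Paper

namespace CategoryTheory.Arrow

variable {C : Type u} [Category.{v} C]

theorem isPushout_of_isPushout_left_right {a b c d : Arrow C} {f : a ⟶ b} {g : a ⟶ c}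
    {h : b ⟶ d} {k : c ⟶ d} (hl : IsPushout f.left g.left h.left k.left)
    (hr : IsPushout f.right g.right h.right k.right) : IsPushout f g h k := by
  have w : f ≫ h = g ≫ k := by
    ext
    · exact hl.w
    · exact hr.w
  exact IsPushout.of_isColimit (c := PushoutCocone.mk h k w) <|
    Comma.fstSndJointlyReflectColimit
      ((isColimitMapCoconePushoutCoconeEquiv _ w).symm hl.isColimit)
      ((isColimitMapCoconePushoutCoconeEquiv _ w).symm hr.isColimit)

theorem isPushout_mk_comp {X Y Z : C} (u : X ⟶ Y) (v : Y ⟶ Z) :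
    IsPushout (homMk u (𝟙 Y) : mk u ⟶ mk (𝟙 Y)) (homMk (𝟙 X) v : mk u ⟶ mk (u ≫ v))
      (homMk (𝟙 Y) v : mk (𝟙 Y) ⟶ mk v) (homMk u (𝟙 Z) : mk (u ≫ v) ⟶ mk v) :=
  isPushout_of_isPushout_left_right (IsPushout.id_vert u) (IsPushout.id_horiz v)

end CategoryTheory.Arrow

namespace Paper

theorem ClosedUnderColimits.of_isPushout {C : Type u} [Category.{v} C]
    {P : MorphismProperty C} (hP : ClosedUnderColimits P) {a b c d : Arrow C} {f : a ⟶ b}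
    {g : a ⟶ c} {h : b ⟶ d} {k : c ⟶ d} (sq : IsPushout f g h k) (ha : P a.hom)
    (hb : P b.hom) (hc : P c.hom) : P d.hom := by
  -- `WalkingSpan` lives in `Type`; transport the pushout to a `v`-small copy of it.
  let e : WalkingSpan ≌ ULiftHom.{v} (ULift.{v} WalkingSpan) :=
    ULiftHomULiftCategory.equiv.{v, v} WalkingSpan
  refine hP _ (e.inverse ⋙ span f g) _ (sq.isColimit.whiskerEquivalence e.symm) ?_
  rintro ⟨_ | _ | _⟩
  exacts [ha, hb, hc]

end Paper

theorem acyclic_right_cancellable_general {C : Type u} [Category.{v} C]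
    (A : Paper.AcyclicClass C) {X Y Z : C} (u : X ⟶ Y) (v : Y ⟶ Z)
    (hvu : A.P (u ≫ v)) (hu : A.P u) : A.P v :=
  A.colim.of_isPushout (Arrow.isPushout_mk_comp u v) hu (A.iso (𝟙 Y) inferInstance) hvu

/-- Any acyclic class in a topos is right cancellable. -/
theorem acyclic_right_cancellable {C : Type u} [Category.{v} C]
    [HasFiniteLimits C] [HasColimits C]
    (A : Paper.AcyclicClass C) {X Y Z : C} (u : X ⟶ Y) (v : Y ⟶ Z)
    (hvu : A.P (u ≫ v)) (hu : A.P u) : A.P v :=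
  acyclic_right_cancellable_general A u v hvu hu
end

section
/- Let A be an acyclic class in a topos E. A map f belongs to A if and only if both its image part im(f) and its coimage (surjective) part coim(f) belong to A. -/
open CategoryTheory CategoryTheory.Limits

universe v u

/-! Since `m` is monic, `e` is the base change of `e ≫ m` along `m`. In the arrow category, `m`
is the coequalizer of the two maps `e₁ ≫ e ≫ m ⟶ e ≫ m` induced by the kernel pair `e₁, e₂` of
`e` (identity on targets), precisely because `e` is an effective epi. Both arrows of that
diagram lie in `A`, as `e₁` is a base change of `e`, so closure under colimits gives `m`. -/

namespace Paper

section KernelPairCofork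

variable {C : Type u} [Category.{v} C] {X I Y : C} (u : X ⟶ I) (v : I ⟶ Y) [HasPullback u u]

noncomputable def kernelPairArrowFst : Arrow.mk (pullback.fst u u ≫ u ≫ v) ⟶ Arrow.mk (u ≫ v) :=
  Arrow.homMk (pullback.fst u u) (𝟙 Y)

noncomputable def kernelPairArrowSnd : Arrow.mk (pullback.fst u u ≫ u ≫ v) ⟶ Arrow.mk (u ≫ v) :=
  Arrow.homMk (pullback.snd u u) (𝟙 Y) (by simp [pullback.condition_assoc])

noncomputable def kernelPairArrowCofork :
    Cofork (kernelPairArrowFst u v) (kernelPairArrowSnd u v) :=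
  Cofork.ofπ (Arrow.homMk u (𝟙 Y) : Arrow.mk (u ≫ v) ⟶ Arrow.mk v)
    (by ext <;> simp [kernelPairArrowFst, kernelPairArrowSnd, pullback.condition])

noncomputable def isColimitKernelPairArrowCofork [EffectiveEpi u] :
    IsColimit (kernelPairArrowCofork u v) :=
  Comma.fstSndJointlyReflectColimit
    ((isColimitMapCoconeCoforkEquiv _ _).symm
      (isColimitCoforkOfEffectiveEpi u _ (pullback.isLimit u u)))
    ((isColimitMapCoconeCoforkEquiv _ _).symm (isColimitIdCofork rfl))

end KernelPairCofork

variable {C : Type u} [Category.{v} C]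

theorem ClosedUnderColimits.of_isColimit {P : MorphismProperty C} (hP : ClosedUnderColimits P)
    {J : Type} [SmallCategory J] {D : J ⥤ Arrow C} {c : Cocone D} (hc : IsColimit c)
    (hD : ∀ j, P (D.obj j).hom) : P c.pt.hom :=
  hP (AsSmall.{v} J) (AsSmall.equiv.inverse ⋙ D) (c.whisker AsSmall.equiv.inverse)
    (hc.whiskerEquivalence AsSmall.equiv.symm) fun _ => hD _

namespace AcyclicClass

variable (A : AcyclicClass C)

theorem of_comp_of_mono {X I Y : C} {e : X ⟶ I} {m : I ⟶ Y} [Mono m] (h : A.P (e ≫ m)) :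
    A.P e :=
  A.base_change _ _ m (𝟙 X)
    (by simpa using (IsPullback.id_horiz e).paste_vert (IsKernelPair.id_of_mono m)) h

theorem of_comp_of_effectiveEpi {X I Y : C} {u : X ⟶ I} {v : I ⟶ Y} [EffectiveEpi u]
    [HasPullback u u] (hu : A.P u) (huv : A.P (u ≫ v)) : A.P v := by
  refine A.colim.of_isColimit (isColimitKernelPairArrowCofork u v) ?_
  rintro (_ | _)
  · exact A.comp _ _ (A.base_change _ _ _ _ (IsPullback.of_hasPullback u u).flip hu) huv
  · exact huv

end AcyclicClass

end Paper

theorem acyclic_mem_iff_image_coimage_mem_general {C : Type u} [Category.{v} C]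
    [HasFiniteLimits C]
    (A : Paper.AcyclicClass C) {X I Y : C} (f : X ⟶ Y) (e : X ⟶ I) (m : I ⟶ Y)
    (hfac : e ≫ m = f) (he : EffectiveEpi e) (hm : Mono m) :
    A.P f ↔ (A.P m ∧ A.P e) := by
  subst hfac
  refine ⟨fun hf => ?_, fun ⟨hm', he'⟩ => A.comp e m he' hm'⟩
  have he' : A.P e := A.of_comp_of_mono hf
  exact ⟨A.of_comp_of_effectiveEpi he' hf, he'⟩

/-- A map belongs to an acyclic class iff both the mono and the surjective parts of
its image factorization do. -/
theorem acyclic_mem_iff_image_coimage_mem {C : Type u} [Category.{v} C]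
    [HasFiniteLimits C] [HasColimits C]
    (A : Paper.AcyclicClass C) {X I Y : C} (f : X ⟶ Y) (e : X ⟶ I) (m : I ⟶ Y)
    (hfac : e ≫ m = f) (he : EffectiveEpi e) (hm : Mono m) :
    A.P f ↔ (A.P m ∧ A.P e) :=
  acyclic_mem_iff_image_coimage_mem_general A f e m hfac he hm
end

section
/- For any acyclic class A in a topos, the class of monomorphisms in A equals the class of images of maps in A, i.e., A ∩ Mono = { im(f) | f ∈ A }; dually, A ∩ Surj = { coim(f) | f ∈ A }. -/
open CategoryTheory CategoryTheory.Limits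

universe v u

/-!
The coimage `e g` of `g` is the base change of `g` along the monomorphism `m g`, and the image
`m g` is the coequalizer, in the arrow category, of the kernel pair of the effective epimorphism
`e g` acting on `g`; so both lie in `A` whenever `g` does. Conversely, a monomorphism
(resp. surjection) is isomorphic, as an arrow, to its own image (resp. coimage), and `A` is
closed under isomorphisms of arrows.
-/

namespace CategoryTheory

variable {C : Type u} [Category.{v} C]

lemma EffectiveEpi.of_arrow_iso {X Y X' Y' : C} {f : X ⟶ Y} {g : X' ⟶ Y'}
    (e : Arrow.mk f ≅ Arrow.mk g) [EffectiveEpi f] : EffectiveEpi g := by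
  have : MorphismProperty.RespectsIso (C := C) (fun _ _ f => EffectiveEpi f) :=
    .mk _ (fun _ _ _ => inferInstance) (fun _ _ _ => inferInstance)
  exact (MorphismProperty.arrow_mk_iso_iff (fun _ _ f => EffectiveEpi f) e).mp ‹_›

lemma isPullback_id_of_mono {W M Z : C} (e : W ⟶ M) (m : M ⟶ Z) [Mono m] :
    IsPullback (𝟙 W) e (e ≫ m) m := by
  have top : IsPullback (𝟙 W) e e (𝟙 M) := .of_horiz_isIso ⟨by simp⟩
  simpa using top.paste_vert (IsKernelPair.id_of_mono m)

abbrev Arrow.homMkOverId {V W Z : C} {k : V ⟶ Z} {g : W ⟶ Z} (p : V ⟶ W) (h : p ≫ g = k) :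
    Arrow.mk k ⟶ Arrow.mk g :=
  Arrow.homMk p (𝟙 Z) (by simp [h])

/-- Colimits in `Arrow C` are computed on sources and targets, and on targets the pair is
`𝟙 Z, 𝟙 Z`, whose coequalizer is `𝟙 Z`. -/
noncomputable def Arrow.isColimitCoforkOverId {V W M Z : C} {p₁ p₂ : V ⟶ W} {e : W ⟶ M}
    {w : p₁ ≫ e = p₂ ≫ e} (hc : IsColimit (Cofork.ofπ e w)) (m : M ⟶ Z) {k : V ⟶ Z}
    (h₁ : p₁ ≫ e ≫ m = k) (h₂ : p₂ ≫ e ≫ m = k) :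
    IsColimit (Cofork.ofπ (Arrow.homMkOverId e rfl : Arrow.mk (e ≫ m) ⟶ Arrow.mk m)
      (by ext <;> simp [w] : Arrow.homMkOverId p₁ h₁ ≫ Arrow.homMkOverId e rfl =
        Arrow.homMkOverId p₂ h₂ ≫ Arrow.homMkOverId e rfl)) := by
  refine Comma.fstSndJointlyReflectColimit ((isColimitMapCoconeCoforkEquiv _ _).symm hc)
    ((isColimitMapCoconeCoforkEquiv _ _).symm ?_)
  exact Cofork.IsColimit.mk _ (fun s => s.π) (fun s => Category.id_comp s.π)
    (fun s n hn => (Category.id_comp n).symm.trans hn)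

end CategoryTheory

namespace Paper.AcyclicClass

variable {C : Type u} [Category.{v} C] (A : AcyclicClass C)

instance respectsIso : A.P.RespectsIso :=
  .mk _ (fun e _ hf => A.comp _ _ (A.iso e.hom inferInstance) hf)
    (fun e _ hf => A.comp _ _ hf (A.iso e.hom inferInstance))

lemma mem_of_isColimit_cofork {f g : Arrow C} {φ₁ φ₂ : f ⟶ g} {c : Cofork φ₁ φ₂}
    (hc : IsColimit c) (hf : A.P f.hom) (hg : A.P g.hom) : A.P c.pt.hom := by
  let equ : AsSmall.{v} WalkingParallelPair ≌ WalkingParallelPair := AsSmall.equiv.symm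
  refine A.colim _ (equ.functor ⋙ parallelPair φ₁ φ₂) (c.whisker equ.functor)
    (hc.whiskerEquivalence equ) ?_
  rintro ⟨_ | _⟩
  exacts [hf, hg]

lemma e_mem (F : ImageFactorisation C) {W Z : C} {g : W ⟶ Z} (hg : A.P g) : A.P (F.e g) := by
  have := F.mono g
  refine A.base_change g (F.e g) (F.m g) (𝟙 W) ?_ hg
  simpa only [F.fac] using isPullback_id_of_mono (F.e g) (F.m g)

lemma m_mem [HasPullbacks C] (F : ImageFactorisation C) {W Z : C} {g : W ⟶ Z} (hg : A.P g) :
    A.P (F.m g) := by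
  have := F.epi g
  have hfst : A.P (pullback.fst (F.e g) (F.e g)) :=
    A.base_change _ _ _ _ (IsPullback.of_hasPullback _ _).flip (A.e_mem F hg)
  have hc := Arrow.isColimitCoforkOverId
    (isColimitCoforkOfEffectiveEpi (F.e g) _ (pullback.isLimit _ _)) (F.m g) rfl
    (by simp only [PullbackCone.condition_assoc])
  refine A.mem_of_isColimit_cofork hc (A.comp _ _ hfst ?_) ?_ <;>
    simpa only [Arrow.mk_hom, F.fac] using hg

end Paper.AcyclicClass

namespace Paper.ImageFactorisation

variable {C : Type u} [Category.{v} C] (F : ImageFactorisation C) {X Y : C} (f : X ⟶ Y)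

lemma isIso_e_of_mono [Mono f] : IsIso (F.e f) := by
  have := F.epi f
  have : Mono (F.e f ≫ F.m f) := by rwa [F.fac]
  have := mono_of_mono (F.e f) (F.m f)
  exact isIso_of_mono_of_strongEpi _

lemma isIso_m_of_effectiveEpi [EffectiveEpi f] : IsIso (F.m f) := by
  have := F.mono f
  have : StrongEpi (F.e f ≫ F.m f) := by rw [F.fac]; infer_instance
  have := strongEpi_of_strongEpi (F.e f) (F.m f)
  exact isIso_of_mono_of_strongEpi _

noncomputable def arrowIsoMOfMono [Mono f] : Arrow.mk f ≅ Arrow.mk (F.m f) :=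
  have := F.isIso_e_of_mono f
  Arrow.isoMk (asIso (F.e f)) (Iso.refl Y) (by simp [F.fac])

noncomputable def arrowIsoEOfEffectiveEpi [EffectiveEpi f] : Arrow.mk f ≅ Arrow.mk (F.e f) :=
  have := F.isIso_m_of_effectiveEpi f
  Arrow.isoMk (Iso.refl X) (asIso (F.m f)).symm (by simp [F.fac])

end Paper.ImageFactorisation

theorem acyclic_inter_mono_eq_images_general {C : Type u} [Category.{v} C]
    [HasFiniteLimits C]
    (F : Paper.ImageFactorisation C) (A : Paper.AcyclicClass C) :
    (∀ ⦃X Y : C⦄ (f : X ⟶ Y), (A.P f ∧ Mono f) ↔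
      ∃ (W Z : C) (g : W ⟶ Z), A.P g ∧ Nonempty (Arrow.mk f ≅ Arrow.mk (F.m g))) ∧
    (∀ ⦃X Y : C⦄ (f : X ⟶ Y), (A.P f ∧ EffectiveEpi f) ↔
      ∃ (W Z : C) (g : W ⟶ Z), A.P g ∧ Nonempty (Arrow.mk f ≅ Arrow.mk (F.e g))) := by
  refine ⟨fun X Y f => ⟨fun ⟨hf, _⟩ => ⟨X, Y, f, hf, ⟨F.arrowIsoMOfMono f⟩⟩, ?_⟩,
    fun X Y f => ⟨fun ⟨hf, _⟩ => ⟨X, Y, f, hf, ⟨F.arrowIsoEOfEffectiveEpi f⟩⟩, ?_⟩⟩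
  · rintro ⟨W, Z, g, hg, ⟨i⟩⟩
    have := F.mono g
    exact ⟨(A.P.arrow_mk_iso_iff i).mpr (A.m_mem F hg),
      ((MorphismProperty.monomorphisms C).arrow_mk_iso_iff i).mpr this⟩
  · rintro ⟨W, Z, g, hg, ⟨i⟩⟩
    have := F.epi g
    exact ⟨(A.P.arrow_mk_iso_iff i).mpr (A.e_mem F hg), EffectiveEpi.of_arrow_iso i.symm⟩

/-- For an acyclic class `A`, `A ∩ Mono` is the class of images of maps of `A`, and
`A ∩ Surj` is the class of coimages of maps of `A`. -/
theorem acyclic_inter_mono_eq_images {C : Type u} [Category.{v} C]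
    [HasFiniteLimits C] [HasColimits C]
    (F : Paper.ImageFactorisation C) (A : Paper.AcyclicClass C) :
    (∀ ⦃X Y : C⦄ (f : X ⟶ Y), (A.P f ∧ Mono f) ↔
      ∃ (W Z : C) (g : W ⟶ Z), A.P g ∧ Nonempty (Arrow.mk f ≅ Arrow.mk (F.m g))) ∧
    (∀ ⦃X Y : C⦄ (f : X ⟶ Y), (A.P f ∧ EffectiveEpi f) ↔
      ∃ (W Z : C) (g : W ⟶ Z), A.P g ∧ Nonempty (Arrow.mk f ≅ Arrow.mk (F.e g))) :=
  acyclic_inter_mono_eq_images_general F A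
end

section
/- The inclusion of the poset of congruences into the poset of acyclic classes in a topos E admits both a left adjoint, given by the congruence closure A ↦ A^cong, and a right adjoint, given by A ↦ A^Δ∞ = { f | all iterated diagonals of f lie in A }. -/
open CategoryTheory CategoryTheory.Limits

universe v u

/-!
The left adjoint is formal: `congClosure S` is the intersection of all congruences containing `S`.
For the right adjoint, the point is that a congruence `W` is closed under diagonals: `Δf` is the
pullback, in the arrow category, of the square `𝟙 X ⟶ f` along itself, and `W` contains `𝟙 X` and
`f`. Hence every iterated diagonal of a map of `W` lies in `W`, so `W ⊆ A` forces `W ⊆ A^Δ∞`.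
-/

namespace Paper

variable {C : Type u} [Category.{v} C]

lemma Arrow.isPullback_of_isPullback_left_right {T A B Z : Arrow C}
    {fst : T ⟶ A} {snd : T ⟶ B} {f : A ⟶ Z} {g : B ⟶ Z} (w : fst ≫ f = snd ≫ g)
    (hl : IsPullback fst.left snd.left f.left g.left)
    (hr : IsPullback fst.right snd.right f.right g.right) :
    IsPullback fst snd f g :=
  IsPullback.of_isLimit' ⟨w⟩ <| Comma.fstSndJointlyReflectLimit
    ((isLimitMapConePullbackConeEquiv _ w).symm hl.isLimit)
    ((isLimitMapConePullbackConeEquiv _ w).symm hr.isLimit)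

lemma Arrow.isPullback_diagonal [HasPullbacks C] {X Y : C} (f : X ⟶ Y) :
    IsPullback
      (Arrow.homMk (𝟙 X) (pullback.fst f f) (by simp) :
        Arrow.mk (pullback.diagonal f) ⟶ Arrow.mk (𝟙 X))
      (Arrow.homMk (𝟙 X) (pullback.snd f f) (by simp) :
        Arrow.mk (pullback.diagonal f) ⟶ Arrow.mk (𝟙 X))
      (Arrow.homMk (𝟙 X) f (by simp) : Arrow.mk (𝟙 X) ⟶ Arrow.mk f)
      (Arrow.homMk (𝟙 X) f (by simp) : Arrow.mk (𝟙 X) ⟶ Arrow.mk f) :=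
  Arrow.isPullback_of_isPullback_left_right (by ext <;> simp [pullback.condition])
    IsPullback.of_id_fst (IsPullback.of_hasPullback f f)

lemma ClosedUnderFiniteLimits.of_isPullback {P : MorphismProperty C}
    (hP : ClosedUnderFiniteLimits P) {T A B Z : Arrow C} {fst : T ⟶ A} {snd : T ⟶ B}
    {f : A ⟶ Z} {g : B ⟶ Z} (h : IsPullback fst snd f g) (hA : P A.hom) (hB : P B.hom)
    (hZ : P Z.hom) : P T.hom := by
  -- `WalkingCospan` lives in `Type`, the shapes of `ClosedUnderFiniteLimits` in `Type v`
  let e := (ULiftHomULiftCategory.equiv.{v, v} WalkingCospan).symm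
  refine hP _ (e.functor ⋙ cospan f g) (h.cone.whisker e.functor)
    (h.isLimit.whiskerEquivalence e) fun j => ?_
  have hcospan : ∀ k, P ((cospan f g).obj k).hom := by
    rintro (_ | _ | _) <;> assumption
  exact hcospan (e.functor.obj j)

lemma ClosedUnderFiniteLimits.diagonal [HasPullbacks C] {P : MorphismProperty C}
    (hP : ClosedUnderFiniteLimits P) {X Y : C} {f : X ⟶ Y} (hf : P f) (hX : P (𝟙 X)) :
    P (pullback.diagonal f) :=
  hP.of_isPullback (Arrow.isPullback_diagonal f) hX hX hf

lemma AcyclicClass.iterDiag_mem [HasPullbacks C] (W : AcyclicClass C)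
    (hW : ClosedUnderFiniteLimits W.P) (n : ℕ) {f : Arrow C} (hf : W.P f.hom) :
    W.P (iterDiag n f).hom := by
  induction n generalizing f with
  | zero => exact hf
  | succ n ih => exact ih (hW.diagonal hf (W.iso _ inferInstance))

end Paper

theorem congruence_inclusion_adjoints_general {C : Type u} [Category.{v} C]
    [HasFiniteLimits C] :
    (∀ (A : Paper.AcyclicClass C) (W : Paper.AcyclicClass C),
      Paper.ClosedUnderFiniteLimits W.P →
      ((∀ ⦃X Y : C⦄ (f : X ⟶ Y), Paper.congClosure A.P f → W.P f) ↔
       (∀ ⦃X Y : C⦄ (f : X ⟶ Y), A.P f → W.P f))) ∧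
    (∀ (A : Paper.AcyclicClass C) (W : Paper.AcyclicClass C),
      Paper.ClosedUnderFiniteLimits W.P →
      ((∀ ⦃X Y : C⦄ (f : X ⟶ Y), W.P f → Paper.suspInfty A.P f) ↔
       (∀ ⦃X Y : C⦄ (f : X ⟶ Y), W.P f → A.P f))) := by
  refine ⟨fun A W hW => ⟨?_, ?_⟩, fun A W hW => ⟨?_, ?_⟩⟩
  · exact fun h _ _ f hf => h f fun _ _ hA => hA f hf
  · exact fun h _ _ f hf => hf W hW h
  · exact fun h _ _ f hf => h f hf 0
  · exact fun h _ _ f hf n => h _ (W.iterDiag_mem hW n hf)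

/-- The inclusion of congruences into acyclic classes has a left adjoint (congruence
closure) and a right adjoint `A ↦ A^Δ∞`. -/
theorem congruence_inclusion_adjoints {C : Type u} [Category.{v} C]
    [HasFiniteLimits C] [HasColimits C] :
    (∀ (A : Paper.AcyclicClass C) (W : Paper.AcyclicClass C),
      Paper.ClosedUnderFiniteLimits W.P →
      ((∀ ⦃X Y : C⦄ (f : X ⟶ Y), Paper.congClosure A.P f → W.P f) ↔
       (∀ ⦃X Y : C⦄ (f : X ⟶ Y), A.P f → W.P f))) ∧
    (∀ (A : Paper.AcyclicClass C) (W : Paper.AcyclicClass C),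
      Paper.ClosedUnderFiniteLimits W.P →
      ((∀ ⦃X Y : C⦄ (f : X ⟶ Y), W.P f → Paper.suspInfty A.P f) ↔
       (∀ ⦃X Y : C⦄ (f : X ⟶ Y), W.P f → A.P f))) :=
  congruence_inclusion_adjoints_general
end

section
/- Let j : Ω → Ω be a Lawvere–Tierney topology on a topos E, with Dense(j) the class of j-dense monomorphisms and Close(j) the class of j-closed monomorphisms. Then (Dense(j), Close(j)) forms a factorization system on monomorphisms: Dense(j) ⊥ Close(j), Close(j) = Dense(j)^⊥ ∩ Mono, Dense(j) = ^⊥Close(j) ∩ Mono, and every monomorphism factors uniquely as a j-dense monomorphism followed by a j-closed monomorphism. -/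
open CategoryTheory CategoryTheory.Limits

universe v u

/-!
A dense mono `u` and a closed mono `f` in a commutative square `u ≫ b = a ≫ f`: the pullback
`b^* f` contains `u`, so its closure is everything; being the pullback of a closed subobject it is
closed, hence `b^* f` is all of `A`, i.e. `b` factors through `f`. The closure `j(S)` of a
subobject `S` splits `S ↪ A` into the dense `S ↪ j(S)` and the closed `j(S) ↪ A`. Orthogonality
determines both classes among monos, and factorizations up to unique isomorphism, by the usual
retract arguments.
-/

namespace Paper

section UniqueLift

variable {C : Type u} [Category.{v} C]

theorem UniqueLift.isIso_left {A B Z : C} {u : A ⟶ B} {v : B ⟶ Z} {f : A ⟶ Z} [Mono v]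
    (h : UniqueLift u f) (hfac : u ≫ v = f) : IsIso u := by
  subst hfac
  obtain ⟨d, ⟨hud, hdv⟩, -⟩ := h (𝟙 A) v (Category.id_comp _).symm
  refine ⟨d, hud, ?_⟩
  rw [← cancel_mono v, Category.assoc, hdv, Category.id_comp]

theorem UniqueLift.isIso_right {A B Z : C} {g : A ⟶ B} {f : B ⟶ Z} {u : A ⟶ Z} [Mono f]
    (h : UniqueLift u f) (hfac : g ≫ f = u) : IsIso f := by
  subst hfac
  obtain ⟨d, ⟨hd, hdf⟩, -⟩ := h g (𝟙 Z) (Category.comp_id _)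
  refine ⟨d, ?_, hdf⟩
  rw [← cancel_mono f, Category.assoc, hdf, Category.comp_id, Category.id_comp]

theorem UniqueLift.existsUnique_iso_of_fac_eq {A B B' Z : C} {u : A ⟶ B} {v : B ⟶ Z}
    {u' : A ⟶ B'} {v' : B' ⟶ Z} [Mono v] [Mono v'] (hfac : u ≫ v = u' ≫ v')
    (h : UniqueLift u v') (h' : UniqueLift u' v) :
    ∃ e : B ⟶ B', (u ≫ e = u' ∧ e ≫ v' = v ∧ IsIso e) ∧
      ∀ e' : B ⟶ B', u ≫ e' = u' ∧ e' ≫ v' = v → e' = e := by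
  obtain ⟨e, ⟨hue, hev⟩, he_unique⟩ := h u' v hfac
  obtain ⟨e', -, he'v⟩ := (h' u v' hfac.symm).exists
  have hee' : e ≫ e' = 𝟙 B := by
    rw [← cancel_mono v, Category.assoc, he'v, hev, Category.id_comp]
  have he'e : e' ≫ e = 𝟙 B' := by
    rw [← cancel_mono v', Category.assoc, hev, he'v, Category.id_comp]
  exact ⟨e, ⟨hue, hev, ⟨e', hee', he'e⟩⟩, he_unique⟩

end UniqueLift

namespace LTTopology

open Subobject

variable {C : Type u} [Category.{v} C] [HasPullbacks C] (jt : LTTopology C)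

theorem closedClass_closure_arrow {A : C} (S : Subobject A) :
    ClosedClass jt (jt.j A S).arrow :=
  ⟨inferInstance, by rw [mk_arrow, jt.idem]⟩

theorem pullback_arrow_obj_mk {A Z : C} {w : A ⟶ Z} [Mono w] {T : Subobject Z}
    (h : Subobject.mk w ≤ T) :
    (Subobject.pullback T.arrow).obj (Subobject.mk w) = Subobject.mk (ofMkLE w T h) := by
  have hw : Subobject.mk w = (map T.arrow).obj (Subobject.mk (ofMkLE w T h)) := by
    rw [map_mk]
    exact mk_eq_mk_of_comm _ _ (Iso.refl A) (by simp)
  exact (congrArg _ hw).trans (pullback_map_self _ _)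

theorem denseClass_ofMkLE_closure {A Z : C} (w : A ⟶ Z) [Mono w] :
    DenseClass jt (ofMkLE w _ (jt.inflating Z (Subobject.mk w))) := by
  have hT : ∀ T : Subobject Z, (Subobject.pullback T.arrow).obj T = ⊤ := fun T => by
    simpa only [mk_arrow] using pullback_self T.arrow
  exact ⟨inferInstance, by rw [← pullback_arrow_obj_mk, ← jt.natural, hT]⟩

theorem exists_denseClass_closedClass_fac {A Z : C} (w : A ⟶ Z) [Mono w] :
    ∃ (B : C) (u : A ⟶ B) (v : B ⟶ Z), u ≫ v = w ∧ DenseClass jt u ∧ ClosedClass jt v :=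
  ⟨_, _, _, ofMkLE_arrow _, jt.denseClass_ofMkLE_closure w, jt.closedClass_closure_arrow _⟩

theorem closedClass_isIso_comp {A B Z : C} (u : A ⟶ B) [IsIso u] {v : B ⟶ Z}
    (hv : ClosedClass jt v) : ClosedClass jt (u ≫ v) := by
  obtain ⟨_, hclosed⟩ := hv
  refine ⟨inferInstance, ?_⟩
  rwa [mk_eq_mk_of_comm (u ≫ v) v (asIso u) rfl]

theorem isIso_pullback_snd_of_denseClass_of_closedClass {S A X Y : C} {u : S ⟶ A} {f : X ⟶ Y}
    (hu : DenseClass jt u) (hf : ClosedClass jt f) {a : S ⟶ X} {b : A ⟶ Y}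
    (hsq : u ≫ b = a ≫ f) : IsIso (pullback.snd f b) := by
  obtain ⟨_, hdense⟩ := hu
  obtain ⟨_, hclosed⟩ := hf
  have hle : Subobject.mk u ≤ (Subobject.pullback b).obj (Subobject.mk f) :=
    mk_le_mk_of_comm (pullback.lift a u hsq.symm) (pullback.lift_snd _ _ _)
  have hclosed_pullback : jt.j A ((Subobject.pullback b).obj (Subobject.mk f)) =
      (Subobject.pullback b).obj (Subobject.mk f) := by
    rw [← jt.natural, hclosed]
  have htop : (Subobject.pullback b).obj (Subobject.mk f) = ⊤ :=
    top_le_iff.mp (hdense ▸ hclosed_pullback ▸ jt.monotone A _ _ hle)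
  exact (isIso_iff_mk_eq_top _).mpr htop

theorem uniqueLift_of_denseClass_of_closedClass {S A X Y : C} {u : S ⟶ A} {f : X ⟶ Y}
    (hu : DenseClass jt u) (hf : ClosedClass jt f) : UniqueLift u f := by
  have := hf.1
  intro a b hsq
  have := jt.isIso_pullback_snd_of_denseClass_of_closedClass hu hf hsq
  refine ⟨inv (pullback.snd f b) ≫ pullback.fst f b, ⟨?_, ?_⟩, fun d ⟨_, hdf⟩ => ?_⟩
  · simp [← cancel_mono f, pullback.condition, hsq]
  · simp [pullback.condition]
  · simp [← cancel_mono f, hdf, pullback.condition]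

theorem closedClass_iff_mono_and_uniqueLift {X Y : C} (f : X ⟶ Y) :
    ClosedClass jt f ↔ Mono f ∧ ∀ ⦃S A : C⦄ (u : S ⟶ A), DenseClass jt u → UniqueLift u f := by
  refine ⟨fun hf => ⟨hf.1, fun _ _ u hu => jt.uniqueLift_of_denseClass_of_closedClass hu hf⟩, ?_⟩
  rintro ⟨_, horth⟩
  obtain ⟨B, u, v, hfac, hu, hv⟩ := jt.exists_denseClass_closedClass_fac f
  have := hv.1
  have := (horth u hu).isIso_left hfac
  exact hfac ▸ jt.closedClass_isIso_comp u hv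

theorem denseClass_iff_mono_and_uniqueLift {S A : C} (u : S ⟶ A) :
    DenseClass jt u ↔ Mono u ∧ ∀ ⦃X Y : C⦄ (f : X ⟶ Y), ClosedClass jt f → UniqueLift u f := by
  refine ⟨fun hu => ⟨hu.1, fun _ _ f hf => jt.uniqueLift_of_denseClass_of_closedClass hu hf⟩, ?_⟩
  rintro ⟨hmono, horth⟩
  have hlift := horth _ (jt.closedClass_closure_arrow (Subobject.mk u))
  have := hlift.isIso_right (ofMkLE_arrow (jt.inflating A (Subobject.mk u)))
  exact ⟨hmono, eq_top_of_isIso_arrow _⟩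

end LTTopology

end Paper

/-- A Lawvere–Tierney topology `j` yields a factorization system on monomorphisms:
dense and closed monos are uniquely orthogonal, each class is determined by the other via
orthogonality among monos, and every monomorphism factors uniquely (up to unique compatible
isomorphism) as a dense mono followed by a closed mono. -/
theorem LT_factorization_system {C : Type u} [Category.{v} C] [HasPullbacks C]
    (jt : Paper.LTTopology C) :
    (∀ ⦃S A X Y : C⦄ (u : S ⟶ A) (f : X ⟶ Y),
      Paper.DenseClass jt u → Paper.ClosedClass jt f → Paper.UniqueLift u f) ∧
    (∀ ⦃X Y : C⦄ (f : X ⟶ Y), Paper.ClosedClass jt f ↔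
      (Mono f ∧ ∀ ⦃S A : C⦄ (u : S ⟶ A), Paper.DenseClass jt u → Paper.UniqueLift u f)) ∧
    (∀ ⦃S A : C⦄ (u : S ⟶ A), Paper.DenseClass jt u ↔
      (Mono u ∧ ∀ ⦃X Y : C⦄ (f : X ⟶ Y), Paper.ClosedClass jt f → Paper.UniqueLift u f)) ∧
    (∀ ⦃A Z : C⦄ (w : A ⟶ Z), Mono w →
      ∃ (B : C) (u : A ⟶ B) (v : B ⟶ Z),
        u ≫ v = w ∧ Paper.DenseClass jt u ∧ Paper.ClosedClass jt v ∧
        ∀ (B' : C) (u' : A ⟶ B') (v' : B' ⟶ Z), u' ≫ v' = w →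
          Paper.DenseClass jt u' → Paper.ClosedClass jt v' →
          ∃ e : B ⟶ B', (u ≫ e = u' ∧ e ≫ v' = v ∧ IsIso e) ∧
            ∀ e' : B ⟶ B', u ≫ e' = u' ∧ e' ≫ v' = v → e' = e) := by
  refine ⟨fun _ _ _ _ u f hu hf => jt.uniqueLift_of_denseClass_of_closedClass hu hf,
    fun _ _ => jt.closedClass_iff_mono_and_uniqueLift,
    fun _ _ => jt.denseClass_iff_mono_and_uniqueLift, ?_⟩
  intro A Z w _
  obtain ⟨B, u, v, hfac, hu, hv⟩ := jt.exists_denseClass_closedClass_fac w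
  refine ⟨B, u, v, hfac, hu, hv, fun B' u' v' hfac' hu' hv' => ?_⟩
  have := hv.1
  have := hv'.1
  exact Paper.UniqueLift.existsUnique_iso_of_fac_eq (hfac.trans hfac'.symm)
    (jt.uniqueLift_of_denseClass_of_closedClass hu hv')
    (jt.uniqueLift_of_denseClass_of_closedClass hu' hv)
end

section
/- An algebraic morphism of topoi φ : E → F is cotopological (its congruence W_φ contains no non-invertible monomorphism) if and only if φ reflects surjective maps, if and only if φ reflects n-connected maps for some (equivalently every) −1 ≤ n ≤ ∞. -/
open CategoryTheory CategoryTheory.Limits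

universe v u

/-!
A cotopological morphism `φ` is conservative: if `φ f` is invertible then so is `φ (Δ f)`, and
`Δ f` is a monomorphism, so `Δ f` is invertible, i.e. `f` is a monomorphism, and then `f` is
invertible. If `φ f` is surjective, factor `f` through the coequalizer of its kernel pair; `φ`
preserves kernel pairs and coequalizers, and `φ f` is the coequalizer of its own kernel pair, so `φ`
inverts the comparison map, which is therefore invertible. As `φ` commutes with iterated
diagonals, reflecting surjections means reflecting `n`-connected maps for every `n`. Conversely, a
monomorphism inverted by `φ` is sent to an `∞`-connected map, so as soon as `φ` reflects
`n`-connected maps for one `n` it is surjective, hence invertible.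
-/

namespace Paper

open MorphismProperty (diagonal regularEpi regularEpi_iff inverseImage_iff)

section IteratedDiagonal

variable {C : Type*} [Category* C] [HasPullbacks C]

lemma iterDiag_mem_iff (P : MorphismProperty C) (n : ℕ) {X Y : C} (f : X ⟶ Y) :
    P (iterDiag n (Arrow.mk f)).hom ↔ (diagonal^[n] P) f := by
  induction n generalizing X Y with
  | zero => rfl
  | succ n ih => rw [Function.iterate_succ_apply']; exact ih (pullback.diagonal f)

instance respectsIso_iterate_diagonal (P : MorphismProperty C) [P.RespectsIso] (n : ℕ) :
    (diagonal^[n] P).RespectsIso := by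
  induction n with
  | zero => assumption
  | succ n ih => rw [Function.iterate_succ_apply']; infer_instance

lemma monotone_diagonal : Monotone (diagonal : MorphismProperty C → MorphismProperty C) :=
  fun _ _ hPQ _ _ f hf => hPQ (pullback.diagonal f) hf

lemma effectiveEpi_iterDiag_iff (n : ℕ) {X Y : C} (f : X ⟶ Y) :
    EffectiveEpi (iterDiag n (Arrow.mk f)).hom ↔ (diagonal^[n] (regularEpi C)) f := by
  rw [← iterDiag_mem_iff, regularEpi_iff, isRegularEpi_iff_effectiveEpi]

lemma isIso_iterDiag (n : ℕ) {X Y : C} (f : X ⟶ Y) [IsIso f] :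
    IsIso (iterDiag n (Arrow.mk f)).hom := by
  induction n generalizing X Y with
  | zero => assumption
  | succ n ih =>
    have : IsIso (pullback.diagonal f) := (pullback.isIso_diagonal_iff f).2 inferInstance
    exact ih (pullback.diagonal f)

lemma connMaps_of_isIso (n : ℕ) {X Y : C} (f : X ⟶ Y) [IsIso f] : connMaps n f := fun k _ =>
  have := isIso_iterDiag k f
  inferInstance

lemma infConn_of_isIso {X Y : C} (f : X ⟶ Y) [IsIso f] : infConn f := fun k =>
  have := isIso_iterDiag k f
  inferInstance

end IteratedDiagonal

section Functor

variable {C D : Type*} [Category* C] [Category* D] [HasPullbacks C]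
  (φ : C ⥤ D) [PreservesLimitsOfShape WalkingCospan φ]

lemma isIso_map_coequalizer_desc_of_effectiveEpi_map
    [HasCoequalizers C] [PreservesColimitsOfShape WalkingParallelPair φ]
    {X Y : C} (f : X ⟶ Y) [EffectiveEpi (φ.map f)] :
    IsIso (φ.map (coequalizer.desc f (pullback.condition (f := f) (g := f)))) := by
  have hf : IsColimit (Cofork.ofπ (φ.map f) _) :=
    (EffectiveEpi.getStruct (φ.map f)).isColimitCoforkOfIsPullback
      ((IsPullback.of_hasPullback f f).map φ)
  have hπ := isColimitOfHasCoequalizerOfPreservesColimit φ (pullback.fst f f) (pullback.snd f f)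
  have hu : φ.map (coequalizer.π _ _) ≫ φ.map (coequalizer.desc f pullback.condition) =
      φ.map f := by
    rw [← φ.map_comp, coequalizer.π_desc]
  have : (hπ.coconePointUniqueUpToIso hf).hom = φ.map (coequalizer.desc f pullback.condition) :=
    Cofork.IsColimit.hom_ext hπ (by
      rw [Cofork.π_ofπ, hu]; exact hπ.comp_coconePointUniqueUpToIso_hom hf .one)
  rw [← this]
  infer_instance

variable [HasPullbacks D]

lemma map_diagonal_comp_preservesPullbackIso_hom {X Y : C} (f : X ⟶ Y) :
    φ.map (pullback.diagonal f) ≫ (PreservesPullback.iso φ f f).hom =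
      pullback.diagonal (φ.map f) := by
  apply pullback.hom_ext <;> simp [← φ.map_comp]

lemma inverseImage_diagonal (P : MorphismProperty D) [P.RespectsIso] :
    (P.inverseImage φ).diagonal = P.diagonal.inverseImage φ := by
  ext X Y f
  change P (φ.map (pullback.diagonal f)) ↔ P (pullback.diagonal (φ.map f))
  rw [← map_diagonal_comp_preservesPullbackIso_hom, P.cancel_right_of_respectsIso]

lemma iterate_diagonal_inverseImage (P : MorphismProperty D) [P.RespectsIso] (n : ℕ) :
    diagonal^[n] (P.inverseImage φ) = (diagonal^[n] P).inverseImage φ := by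
  induction n with
  | zero => rfl
  | succ n ih => simp only [Function.iterate_succ_apply', ih, inverseImage_diagonal]

lemma effectiveEpi_iterDiag_of_map [φ.ReflectsEffectiveEpis] (n : ℕ) {X Y : C} (f : X ⟶ Y)
    (hf : EffectiveEpi (iterDiag n (Arrow.mk (φ.map f))).hom) :
    EffectiveEpi (iterDiag n (Arrow.mk f)).hom := by
  have hle : (regularEpi D).inverseImage φ ≤ regularEpi C := fun _ _ g hg => by
    simp only [inverseImage_iff, regularEpi_iff, isRegularEpi_iff_effectiveEpi] at hg ⊢
    exact φ.effectiveEpi_of_map g hg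
  rw [effectiveEpi_iterDiag_iff] at hf ⊢
  refine (monotone_diagonal.iterate n) hle f ?_
  rwa [iterate_diagonal_inverseImage]

lemma connMaps_of_connMaps_map [φ.ReflectsEffectiveEpis] (n : ℕ) {X Y : C} (f : X ⟶ Y)
    (hf : connMaps n (φ.map f)) : connMaps n f :=
  fun k hk => effectiveEpi_iterDiag_of_map φ k f (hf k hk)

lemma infConn_of_infConn_map [φ.ReflectsEffectiveEpis] {X Y : C} (f : X ⟶ Y)
    (hf : infConn (φ.map f)) : infConn f :=
  fun k => effectiveEpi_iterDiag_of_map φ k f (hf k)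

lemma reflectsIsomorphisms_of_isIso_of_mono
    (hφ : ∀ ⦃X Y : C⦄ (f : X ⟶ Y), Mono f → IsIso (φ.map f) → IsIso f) :
    φ.ReflectsIsomorphisms where
  reflects {X Y} f _ := by
    have : IsIso (φ.map (pullback.diagonal f) ≫ (PreservesPullback.iso φ f f).hom) := by
      rw [map_diagonal_comp_preservesPullbackIso_hom]
      exact (pullback.isIso_diagonal_iff _).2 inferInstance
    have : IsIso (φ.map (pullback.diagonal f)) :=
      IsIso.of_isIso_comp_right _ (PreservesPullback.iso φ f f).hom
    have : Mono f := (pullback.isIso_diagonal_iff f).1 (hφ _ inferInstance this)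
    exact hφ f this inferInstance

lemma reflectsEffectiveEpis_of_isIso_of_mono
    [HasCoequalizers C] [PreservesColimitsOfShape WalkingParallelPair φ]
    (hφ : ∀ ⦃X Y : C⦄ (f : X ⟶ Y), Mono f → IsIso (φ.map f) → IsIso f) :
    φ.ReflectsEffectiveEpis where
  reflects f _ := by
    have := reflectsIsomorphisms_of_isIso_of_mono φ hφ
    have := isIso_map_coequalizer_desc_of_effectiveEpi_map φ f
    have := isIso_of_reflects_iso (coequalizer.desc f pullback.condition) φ
    have h : IsRegularEpi (coequalizer.π _ _ ≫ coequalizer.desc f pullback.condition) :=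
      ((regularEpi C).cancel_right_of_respectsIso _ _).2 (inferInstanceAs (IsRegularEpi _))
    rw [coequalizer.π_desc] at h
    infer_instance

end Functor

end Paper

theorem cotopological_characterization_general {E : Type u} {F : Type u}
    [Category.{v} E] [Category.{v} F]
    [HasFiniteLimits E] [HasColimits E] [HasFiniteLimits F]
    (φ : E ⥤ F) [PreservesColimits φ] [PreservesFiniteLimits φ] :
    List.TFAE [
      ∀ ⦃X Y : E⦄ (f : X ⟶ Y), Mono f → IsIso (φ.map f) → IsIso f,
      ∀ ⦃X Y : E⦄ (f : X ⟶ Y), EffectiveEpi (φ.map f) → EffectiveEpi f,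
      ∃ n : ℕ, ∀ ⦃X Y : E⦄ (f : X ⟶ Y),
        Paper.connMaps (n+1) (φ.map f) → Paper.connMaps (n+1) f,
      ∀ n : ℕ, ∀ ⦃X Y : E⦄ (f : X ⟶ Y),
        Paper.connMaps (n+1) (φ.map f) → Paper.connMaps (n+1) f,
      ∀ ⦃X Y : E⦄ (f : X ⟶ Y), Paper.infConn (φ.map f) → Paper.infConn f ] := by
  tfae_have 1 → 2 := fun h1 _ _ f =>
    (Paper.reflectsEffectiveEpis_of_isIso_of_mono φ h1).reflects f
  tfae_have 2 → 4 := fun h2 n _ _ f =>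
    have : φ.ReflectsEffectiveEpis := ⟨fun f => h2 f⟩
    Paper.connMaps_of_connMaps_map φ (n + 1) f
  tfae_have 2 → 5 := fun h2 _ _ f =>
    have : φ.ReflectsEffectiveEpis := ⟨fun f => h2 f⟩
    Paper.infConn_of_infConn_map φ f
  tfae_have 4 → 3 := fun h4 => ⟨0, h4 0⟩
  tfae_have 3 → 1 := by
    rintro ⟨n, h3⟩ X Y f _ _
    have : EffectiveEpi f := h3 f (Paper.connMaps_of_isIso _ _) 0 n.succ_pos
    exact isIso_of_mono_of_strongEpi f
  tfae_have 5 → 1 := by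
    intro h5 X Y f _ _
    have : EffectiveEpi f := h5 f (Paper.infConn_of_isIso _) 0
    exact isIso_of_mono_of_strongEpi f
  tfae_finish

/-- An algebraic morphism of topoi (cocontinuous left-exact functor) is
cotopological (inverts no non-invertible monomorphism) iff it reflects surjections, iff it
reflects n-connected maps for some n, iff for every n, iff it reflects ∞-connected maps. -/
theorem cotopological_characterization {E : Type u} {F : Type u}
    [Category.{v} E] [Category.{v} F]
    [HasFiniteLimits E] [HasColimits E] [HasFiniteLimits F] [HasColimits F]
    (φ : E ⥤ F) [PreservesColimits φ] [PreservesFiniteLimits φ] :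
    List.TFAE [
      ∀ ⦃X Y : E⦄ (f : X ⟶ Y), Mono f → IsIso (φ.map f) → IsIso f,
      ∀ ⦃X Y : E⦄ (f : X ⟶ Y), EffectiveEpi (φ.map f) → EffectiveEpi f,
      ∃ n : ℕ, ∀ ⦃X Y : E⦄ (f : X ⟶ Y),
        Paper.connMaps (n+1) (φ.map f) → Paper.connMaps (n+1) f,
      ∀ n : ℕ, ∀ ⦃X Y : E⦄ (f : X ⟶ Y),
        Paper.connMaps (n+1) (φ.map f) → Paper.connMaps (n+1) f,
      ∀ ⦃X Y : E⦄ (f : X ⟶ Y), Paper.infConn (φ.map f) → Paper.infConn f ] :=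
  cotopological_characterization_general φ
end
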